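/- Let F_q(t) = ∑_{m=0}^∞ B_m(q) t^m/m! be the exponential generating function of the q-Bernoulli numbers. Then F_q(qt) = e^t F_q(t) − t e^t as an identity of formal power series (or of analytic functions where convergent). -/

import Mathlib

/-!
Write `a = q - 1`, `g_0 = 1 / log q` and `g_r = r / (q ^ r - 1)` for `r ≥ 1`, so that
`B_m = a ^ (1 - m) ∑_r (-1) ^ r C(m, r) g_r` is a binomial transform. Hence
`F(t) = a e^{t/a} G(-t/a)` with `G(s) = ∑ g_r s^r / r!`. Since `(q ^ r - 1) g_r = r` for `r ≥ 1`
(and `g_0` cancels), `G(qs) - G(s) = s e^s`; together with `e^t e^{t/a} = e^{qt/a}` this gives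
`F(qt) - e^t F(t) = a e^{qt/a} (G(-qt/a) - G(-t/a)) = -t e^t`.
-/

/-- The `q`-Bernoulli numbers: `B_0(q) = (q-1)/log q` and, for `m ≥ 1`,
`B_m(q) = (q-1)^{1-m} (∑_{r=1}^m (-1)^r C(m,r) r/(q^r-1) + 1/log q)`. -/
noncomputable def qBern (q : ℝ) (m : ℕ) : ℝ :=
  if m = 0 then (q - 1) / Real.log q
  else (q - 1) ^ (1 - (m : ℤ)) *
    (∑ r ∈ Finset.Icc 1 m, (-1 : ℝ) ^ r * (m.choose r : ℝ) * r / (q ^ r - 1) + 1 / Real.log q)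

open PowerSeries Finset Nat

theorem PowerSeries.exp_mul_mk_div_factorial {K : Type*} [Field K] [CharZero K] (c : ℕ → K) :
    exp K * mk (fun r => c r / r !) =
      mk fun m => (∑ r ∈ range (m + 1), m.choose r * c r) / m ! := by
  ext m
  rw [coeff_mul, Nat.sum_antidiagonal_eq_sum_range_succ_mk, coeff_mk, sum_div,
    ← sum_range_reflect]
  refine sum_congr rfl fun r hr => ?_
  have hrm : r ≤ m := Nat.lt_succ_iff.1 (mem_range.1 hr)
  simp only [coeff_exp, coeff_mk, map_div₀, map_one, map_natCast, Nat.cast_choose K hrm]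
  rw [Nat.succ_sub_one, Nat.sub_sub_self hrm]
  field_simp [(m !).cast_ne_zero.2 m.factorial_ne_zero]

theorem PowerSeries.rescale_C {R : Type*} [CommSemiring R] (a c : R) : rescale a (C c) = C c := by
  ext n
  rcases n with _ | n <;> simp [coeff_rescale, coeff_C]

noncomputable def qBernWeight (q : ℝ) (r : ℕ) : ℝ :=
  if r = 0 then 1 / Real.log q else r / (q ^ r - 1)

noncomputable def qBernWeightEGF (q : ℝ) : PowerSeries ℝ :=
  mk fun r => qBernWeight q r / r !

lemma qBern_eq_sum {q : ℝ} (hq : q ≠ 1) (m : ℕ) :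
    qBern q m = (q - 1) * (q - 1)⁻¹ ^ m *
      ∑ r ∈ range (m + 1), m.choose r * ((-1) ^ r * qBernWeight q r) := by
  have hpow : (q - 1) ^ (1 - (m : ℤ)) = (q - 1) * (q - 1)⁻¹ ^ m := by
    rw [zpow_sub₀ (sub_ne_zero.2 hq), zpow_one, zpow_natCast, div_eq_mul_inv, inv_pow]
  rcases Nat.eq_zero_or_pos m with rfl | hm
  · simp [qBern, qBernWeight, div_eq_mul_inv]
  · rw [qBern, if_neg hm.ne', hpow, sum_range_succ', ← Ico_add_one_right_eq_Icc,
      sum_Ico_eq_sum_range]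
    congr 2
    · refine sum_congr rfl fun i _ => ?_
      simp only [qBernWeight, add_comm 1 i, if_neg i.succ_ne_zero]
      push_cast
      ring
    · simp [qBernWeight]

lemma mk_qBern_div_factorial {q : ℝ} (hq : q ≠ 1) :
    mk (fun m => qBern q m / m !) =
      C (q - 1) * (rescale (q - 1)⁻¹ (exp ℝ) * rescale (-(q - 1)⁻¹) (qBernWeightEGF q)) := by
  have hc : rescale (-1) (qBernWeightEGF q) = mk fun r => (-1) ^ r * qBernWeight q r / r ! := by
    simp only [qBernWeightEGF, rescale_mk, mul_div_assoc]
  have hmk : mk (fun m => qBern q m / m !) =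
      C (q - 1) * rescale (q - 1)⁻¹ (exp ℝ * rescale (-1) (qBernWeightEGF q)) := by
    ext m
    rw [hc, PowerSeries.exp_mul_mk_div_factorial, coeff_C_mul, coeff_rescale, coeff_mk, coeff_mk,
      qBern_eq_sum hq]
    ring
  rw [hmk, map_mul, rescale_rescale, neg_one_mul]

lemma rescale_qBernWeightEGF_sub {q : ℝ} (hq0 : 0 < q) (hq1 : q ≠ 1) :
    rescale q (qBernWeightEGF q) - qBernWeightEGF q = X * exp ℝ := by
  ext r
  rw [map_sub, coeff_rescale, qBernWeightEGF, coeff_mk]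
  rcases r with _ | r
  · simp
  · have hqr : q ^ (r + 1) - 1 ≠ 0 :=
      sub_ne_zero.2 ((pow_eq_one_iff_of_nonneg hq0.le r.succ_ne_zero).not.2 hq1)
    simp only [coeff_succ_X_mul, coeff_exp, qBernWeight, if_neg r.succ_ne_zero, map_div₀,
      map_one, map_natCast, Nat.factorial_succ]
    push_cast
    field_simp

/-- `F_q(qt) = e^t F_q(t) - t e^t` for the generating function
`F_q(t) = ∑ B_m(q) t^m/m!`, as formal power series. -/
theorem stmt_11 (q : ℝ) (hq0 : 0 < q) (hq1 : q < 1) :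
    (PowerSeries.mk fun m => qBern q m * q ^ m / (m.factorial : ℝ))
      = PowerSeries.exp ℝ * (PowerSeries.mk fun m => qBern q m / (m.factorial : ℝ))
        - PowerSeries.X * PowerSeries.exp ℝ := by
  have hq : q ≠ 1 := hq1.ne
  set b := (q - 1)⁻¹
  have hb : b * (q - 1) = 1 := inv_mul_cancel₀ (sub_ne_zero.2 hq)
  have hlhs : (mk fun m => qBern q m * q ^ m / (m ! : ℝ)) =
      rescale q (mk fun m => qBern q m / m !) := by
    rw [rescale_mk]
    congr! 2 with m
    ring
  have hG : rescale (-b * q) (qBernWeightEGF q) =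
      rescale (-b) (qBernWeightEGF q) + C (-b) * X * rescale (-b) (exp ℝ) := by
    rw [← rescale_X, ← map_mul, ← rescale_qBernWeightEGF_sub hq0 hq, map_sub, rescale_rescale,
      show q * -b = -b * q by ring]
    abel
  have hE₁ : rescale (b * q) (exp ℝ) * rescale (-b) (exp ℝ) = exp ℝ := by
    rw [exp_mul_exp_eq_exp_add, show b * q + -b = 1 by linear_combination hb, rescale_one,
      RingHom.id_apply]
  have hE₂ : exp ℝ * rescale b (exp ℝ) = rescale (b * q) (exp ℝ) := by
    rw [show b * q = 1 + b by linear_combination hb, ← exp_mul_exp_eq_exp_add, rescale_one,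
      RingHom.id_apply]
  have hC : C (q - 1) * C (-b) = -1 := by
    rw [← map_mul, ← map_one C, ← map_neg]
    congr 1
    linear_combination -hb
  rw [hlhs, mk_qBern_div_factorial hq, map_mul, map_mul, rescale_C, rescale_rescale,
    rescale_rescale, hG]
  linear_combination (X * rescale (b * q) (exp ℝ) * rescale (-b) (exp ℝ)) * hC - X * hE₁ -
    (C (q - 1) * rescale (-b) (qBernWeightEGF q)) * hE₂
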